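/- arXiv:1502.04511 — 9 statements merged into one kernel-verified Lean document; each statement's English description precedes it below -/
import Mathlib

section
/- If G=(V,E) is a finite graph and x : V → {0,1,...,L} is any initial load vector, then there exists an integer-valued output y : V → {0,1,...,L} and a flow f : E → ℤ such that y(v) = x(v) + Σ_{(u,v)∈E} f(u,v) for all v, and |y(u) − y(v)| ≤ 1 for every edge {u,v}. -/
/-!
Among all feasible flows (antisymmetric, supported on edges, with resulting loads in `[0, L]`)
choose one minimising the potential `∑ v, y v ^ 2`. If some edge `{u, v}` had `y v + 2 ≤ y u`,
pushing one unit of load from `u` to `v` would keep the flow feasible and lower the potential by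
`2 (y u - y v - 1) > 0`; hence every edge of a minimiser is happy.
-/

namespace LoadBalancing

open Finset

variable {V : Type*}

section Feasibility

variable [Fintype V]

def load (x : V → ℕ) (f : V → V → ℤ) (v : V) : ℤ := x v + ∑ u, f u v

def potential (x : V → ℕ) (f : V → V → ℤ) : ℤ := ∑ v, load x f v ^ 2

structure IsFeasible (G : SimpleGraph V) (L : ℕ) (x : V → ℕ) (f : V → V → ℤ) : Prop where
  antisymm : ∀ u v, f u v = - f v u
  eq_zero_of_not_adj : ∀ u v, ¬ G.Adj u v → f u v = 0
  load_nonneg : ∀ v, 0 ≤ load x f v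
  load_le : ∀ v, load x f v ≤ L

lemma isFeasible_zero {G : SimpleGraph V} {L : ℕ} {x : V → ℕ} (hx : ∀ v, x v ≤ L) :
    IsFeasible G L x 0 where
  antisymm _ _ := by simp
  eq_zero_of_not_adj _ _ _ := rfl
  load_nonneg v := by simp [load]
  load_le v := by simpa [load] using hx v

lemma exists_isFeasible_forall_potential_le (G : SimpleGraph V) {L : ℕ} {x : V → ℕ}
    (hx : ∀ v, x v ≤ L) :
    ∃ f, IsFeasible G L x f ∧ ∀ g, IsFeasible G L x g → potential x f ≤ potential x g := by
  obtain ⟨p, ⟨f, hf, rfl⟩, hmin⟩ := Int.exists_least_of_bdd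
    (P := fun p => ∃ f, IsFeasible G L x f ∧ potential x f = p)
    ⟨0, fun _ ⟨f, _, hp⟩ => hp ▸ sum_nonneg fun v _ => sq_nonneg _⟩
    ⟨_, 0, isFeasible_zero hx, rfl⟩
  exact ⟨f, hf, fun g hg => hmin _ ⟨g, hg, rfl⟩⟩

end Feasibility

section UnitFlow

variable [DecidableEq V]

def unitFlow (u v : V) (a b : V) : ℤ :=
  (if a = u ∧ b = v then 1 else 0) - (if a = v ∧ b = u then 1 else 0)

lemma unitFlow_antisymm (u v a b : V) : unitFlow u v a b = - unitFlow u v b a := by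
  simp only [unitFlow, and_comm (a := b = _)]
  ring

lemma unitFlow_eq_zero_of_not_adj {G : SimpleGraph V} {u v a b : V} (huv : G.Adj u v)
    (hab : ¬ G.Adj a b) : unitFlow u v a b = 0 := by
  have h₁ : ¬ (a = u ∧ b = v) := by rintro ⟨rfl, rfl⟩; exact hab huv
  have h₂ : ¬ (a = v ∧ b = u) := by rintro ⟨rfl, rfl⟩; exact hab huv.symm
  simp [unitFlow, h₁, h₂]

end UnitFlow

variable [Fintype V] [DecidableEq V]

lemma load_add_unitFlow (x : V → ℕ) (f : V → V → ℤ) (u v w : V) :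
    load x (f + unitFlow u v) w =
      load x f w + (if w = v then 1 else 0) - (if w = u then 1 else 0) := by
  simp only [load, unitFlow, Pi.add_apply, sum_add_distrib, sum_sub_distrib, ite_and,
    sum_ite_eq', mem_univ, if_true]
  ring

lemma potential_add_unitFlow (x : V → ℕ) (f : V → V → ℤ) {u v : V} (huv : u ≠ v) :
    potential x (f + unitFlow u v) = potential x f - 2 * (load x f u - load x f v - 1) := by
  have hdiff : potential x (f + unitFlow u v) - potential x f =
      ∑ w, (load x (f + unitFlow u v) w ^ 2 - load x f w ^ 2) := by
    simp only [potential, sum_sub_distrib]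
  rw [Fintype.sum_eq_add u v huv fun w hw => by simp [load_add_unitFlow, hw.1, hw.2]] at hdiff
  simp only [load_add_unitFlow, huv, huv.symm, if_true, if_false] at hdiff
  linarith

lemma IsFeasible.add_unitFlow {G : SimpleGraph V} {L : ℕ} {x : V → ℕ} {f : V → V → ℤ}
    (hf : IsFeasible G L x f) {u v : V} (huv : G.Adj u v) (hu : 1 ≤ load x f u)
    (hv : load x f v + 1 ≤ L) : IsFeasible G L x (f + unitFlow u v) where
  antisymm a b := by simp only [Pi.add_apply, hf.antisymm a b, unitFlow_antisymm u v a b]; ring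
  eq_zero_of_not_adj a b hab := by
    simp [hf.eq_zero_of_not_adj a b hab, unitFlow_eq_zero_of_not_adj huv hab]
  load_nonneg w := by
    have := hf.load_nonneg w
    rw [load_add_unitFlow]
    split_ifs <;> subst_vars <;> omega
  load_le w := by
    have := hf.load_le w
    rw [load_add_unitFlow]
    split_ifs <;> subst_vars <;> omega

lemma IsFeasible.load_le_load_add_one_of_minimal {G : SimpleGraph V} {L : ℕ} {x : V → ℕ}
    {f : V → V → ℤ} (hf : IsFeasible G L x f)
    (hmin : ∀ g, IsFeasible G L x g → potential x f ≤ potential x g) {u v : V}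
    (huv : G.Adj u v) : load x f u ≤ load x f v + 1 := by
  by_contra! hgap
  have hpush := hmin _ <| hf.add_unitFlow huv (by linarith [hf.load_nonneg v])
    (by linarith [hf.load_le u])
  rw [potential_add_unitFlow x f huv.ne] at hpush
  linarith

end LoadBalancing

open LoadBalancing in
/-- Existence of a discrete locally optimal load balancing on any finite graph:
there are integer loads `y` bounded by `L` and an antisymmetric integer flow `f`
supported on edges with `y v = x v + Σ_u f u v` and all edges happy. -/
theorem stmt0 {V : Type*} [Fintype V] [DecidableEq V] (G : SimpleGraph V)
    (L : ℕ) (x : V → ℕ) (hx : ∀ v, x v ≤ L) :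
    ∃ (y : V → ℕ) (f : V → V → ℤ),
      (∀ u v, f u v = - f v u) ∧
      (∀ u v, ¬ G.Adj u v → f u v = 0) ∧
      (∀ v, (y v : ℤ) = (x v : ℤ) + ∑ u, f u v) ∧
      (∀ v, y v ≤ L) ∧
      (∀ u v, G.Adj u v → |(y u : ℤ) - (y v : ℤ)| ≤ 1) := by
  obtain ⟨f, hf, hmin⟩ := exists_isFeasible_forall_potential_le G hx
  have hy v : ((load x f v).toNat : ℤ) = load x f v := Int.toNat_of_nonneg (hf.load_nonneg v)
  refine ⟨fun v => (load x f v).toNat, f, hf.antisymm, hf.eq_zero_of_not_adj, hy,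
    fun v => Int.toNat_le.mpr (hf.load_le v), fun u v huv => ?_⟩
  rw [hy, hy, abs_sub_le_iff]
  constructor <;> linarith [hf.load_le_load_add_one_of_minimal hmin huv,
    hf.load_le_load_add_one_of_minimal hmin huv.symm]
end

section
/- In the centralised balancing process where one always moves the topmost token of an unhappy edge (so a moved token's height y(u) decreases by at least 1 with each move), every individual token is moved at most L times; consequently there exists a locally optimal discrete load balancing in which every token ends within distance L of its original node. -/
/-!
Every token remembers its origin and its initial height `h₀ ≤ L`. Moving the topmost token of
`u` onto `v` when `y(u) ≥ y(v) + 2` lowers its height by at least one, while its graph distance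
from its origin grows by at most one; hence "distance from origin + current height ≤ h₀" is
invariant, and every token ends within distance `h₀ ≤ L` of its origin, on a stack of height at
most `L`. Each move strictly decreases `∑ v, y(v)²`, so moving as long as some edge is unhappy
terminates in a locally optimal balancing.
-/

open Finset Function

namespace TokenBalancing

structure Token (V : Type*) where
  origin : V
  startHeight : ℕ

variable {V : Type*}

section Stacks

variable (G : SimpleGraph V)

/-- Stacks list their top token first, so the head of `t :: r` sits at height `r.length + 1`. -/
def WellPlaced (v : V) : List (Token V) → Prop
  | [] => True
  | t :: r => (G.Reachable t.origin v ∧ G.dist t.origin v + (r.length + 1) ≤ t.startHeight) ∧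
      WellPlaced v r

variable {G} {v : V} {t : Token V} {l r : List (Token V)}

lemma WellPlaced.of_mem (hl : WellPlaced G v l) (ht : t ∈ l) :
    G.Reachable t.origin v ∧ G.dist t.origin v < t.startHeight := by
  induction l with
  | nil => cases ht
  | cons s r ih =>
    rcases List.mem_cons.mp ht with rfl | ht
    · exact ⟨hl.1.1, by have := hl.1.2; omega⟩
    · exact ih hl.2 ht

lemma WellPlaced.length_le {L : ℕ} (hl : WellPlaced G v l) (hL : ∀ t ∈ l, t.startHeight ≤ L) :
    l.length ≤ L := by
  cases l with
  | nil => exact Nat.zero_le L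
  | cons t r =>
    have := hL t List.mem_cons_self
    have := hl.1.2
    simp only [List.length_cons]
    omega

lemma WellPlaced.cons_of_adj {a b : V} (hab : G.Adj a b) (ht : WellPlaced G a (t :: r))
    (hl : WellPlaced G b l) (hlen : l.length < r.length) : WellPlaced G b (t :: l) := by
  have hdist : G.dist t.origin b ≤ G.dist t.origin a + G.dist a b :=
    hab.reachable.dist_triangle_right t.origin
  rw [SimpleGraph.dist_eq_one_iff_adj.mpr hab] at hdist
  have hheight := ht.1.2
  exact ⟨⟨ht.1.1.trans hab.reachable, by omega⟩, hl⟩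

def initStack (v : V) : ℕ → List (Token V)
  | 0 => []
  | n + 1 => ⟨v, n + 1⟩ :: initStack v n

lemma length_initStack (v : V) (n : ℕ) : (initStack v n).length = n := by
  induction n with
  | zero => rfl
  | succ n ih => simp [initStack, ih]

lemma mem_initStack {n : ℕ} (ht : t ∈ initStack v n) : t.origin = v ∧ t.startHeight ≤ n := by
  induction n with
  | zero => cases ht
  | succ n ih =>
    rcases List.mem_cons.mp ht with rfl | ht
    · exact ⟨rfl, le_rfl⟩
    · exact (ih ht).imp_right Nat.le_succ_of_le

lemma wellPlaced_initStack (G : SimpleGraph V) (v : V) (n : ℕ) :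
    WellPlaced G v (initStack v n) := by
  induction n with
  | zero => trivial
  | succ n ih =>
    refine ⟨⟨SimpleGraph.Reachable.refl v, ?_⟩, ih⟩
    rw [SimpleGraph.dist_self, length_initStack]
    exact (zero_add _).le

variable [DecidableEq V]

lemma countP_origin_initStack (u v : V) (n : ℕ) :
    (initStack v n).countP (·.origin = u) = if v = u then n else 0 := by
  split_ifs with hvu
  · rw [List.countP_eq_length.mpr, length_initStack]
    intro t ht
    simpa [hvu] using (mem_initStack ht).1
  · rw [List.countP_eq_zero]
    intro t ht
    simpa [(mem_initStack ht).1] using hvu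

lemma sum_countP_origin [Fintype V] (l : List (Token V)) :
    ∑ u, l.countP (·.origin = u) = l.length := by
  induction l with
  | nil => simp
  | cons t r ih => simp [List.countP_cons, sum_add_distrib, ih, add_comm]

end Stacks

section Configurations

variable [Fintype V]

def tokens (s : V → List (Token V)) : Multiset (Token V) := ∑ v, (s v : Multiset (Token V))

def potential (s : V → List (Token V)) : ℕ := ∑ v, (s v).length ^ 2

lemma mem_tokens {s : V → List (Token V)} {t : Token V} : t ∈ tokens s ↔ ∃ v, t ∈ s v := by
  simp [tokens, Multiset.mem_sum]

lemma countP_tokens (p : Token V → Prop) [DecidablePred p] (s : V → List (Token V)) :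
    (tokens s).countP p = ∑ v, (s v).countP p := by
  simp only [tokens, ← Multiset.coe_countPAddMonoidHom, map_sum]
  rfl

variable [DecidableEq V]

lemma sum_comp_update_update {α M : Type*} [AddCommMonoid M] {a b : V} (hab : a ≠ b)
    (F : α → M) (s : V → α) (p q : α) :
    ∑ v, F (update (update s a p) b q v) + (F (s a) + F (s b)) =
      ∑ v, F (s v) + (F p + F q) := by
  have hb : b ∈ univ.erase a := mem_erase.2 ⟨hab.symm, mem_univ b⟩
  have hrest : ∀ v ∈ (univ.erase a).erase b, F (update (update s a p) b q v) = F (s v) := by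
    intro v hv
    obtain ⟨hvb, hva, -⟩ := by simpa only [mem_erase] using hv
    rw [update_of_ne hvb, update_of_ne hva]
  rw [← add_sum_erase univ _ (mem_univ a), ← add_sum_erase _ _ hb,
    ← add_sum_erase univ _ (mem_univ a), ← add_sum_erase _ _ hb, sum_congr rfl hrest,
    update_self, update_of_ne hab, update_self]
  abel

variable {G : SimpleGraph V}

lemma exists_move {s : V → List (Token V)} (hs : ∀ v, WellPlaced G v (s v)) {a b : V}
    (hab : G.Adj a b) (hlen : (s b).length + 2 ≤ (s a).length) :
    ∃ s', (∀ v, WellPlaced G v (s' v)) ∧ tokens s' = tokens s ∧ potential s' < potential s := by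
  obtain ⟨t, r, hsa⟩ : ∃ t r, s a = t :: r := List.exists_cons_of_length_pos (by omega)
  have hwa : WellPlaced G a (t :: r) := hsa ▸ hs a
  rw [hsa, List.length_cons] at hlen
  have hne : a ≠ b := hab.ne
  refine ⟨update (update s a r) b (t :: s b), fun v => ?_, ?_, ?_⟩
  · rcases eq_or_ne v b with rfl | hvb
    · rw [update_self]
      exact hwa.cons_of_adj hab (hs v) (by omega)
    rw [update_of_ne hvb]
    rcases eq_or_ne v a with rfl | hva
    · simpa only [update_self] using hwa.2
    · simpa only [update_of_ne hva] using hs v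
  · have key := sum_comp_update_update hne (fun l : List (Token V) => (l : Multiset (Token V)))
      s r (t :: s b)
    have hswap : (r : Multiset (Token V)) + ↑(t :: s b) = ↑(s a) + ↑(s b) := by
      rw [hsa, ← Multiset.cons_coe, ← Multiset.cons_coe, Multiset.add_cons, Multiset.cons_add]
    rw [hswap] at key
    exact add_right_cancel key
  · have := sum_comp_update_update hne (fun l : List (Token V) => l.length ^ 2) s r (t :: s b)
    simp only [hsa, List.length_cons] at this
    unfold potential
    nlinarith

lemma exists_balanced (s : V → List (Token V)) (hs : ∀ v, WellPlaced G v (s v)) :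
    ∃ s', (∀ v, WellPlaced G v (s' v)) ∧ tokens s' = tokens s ∧
      ∀ u v, G.Adj u v → |((s' u).length : ℤ) - (s' v).length| ≤ 1 := by
  induction h : potential s using Nat.strong_induction_on generalizing s with
  | _ n ih =>
    by_cases hbal : ∀ u v, G.Adj u v → |((s u).length : ℤ) - (s v).length| ≤ 1
    · exact ⟨s, hs, rfl, hbal⟩
    obtain ⟨a, b, hab, hlen⟩ : ∃ a b, G.Adj a b ∧ (s b).length + 2 ≤ (s a).length := by
      simp only [not_forall, not_le] at hbal
      obtain ⟨u, v, huv, hgt⟩ := hbal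
      rcases le_or_gt (s v).length (s u).length with hle | hlt
      · exact ⟨u, v, huv, by rw [abs_of_nonneg (by omega)] at hgt; omega⟩
      · exact ⟨v, u, huv.symm, by rw [abs_of_neg (by omega)] at hgt; omega⟩
    obtain ⟨s', hs', htok, hpot⟩ := exists_move hs hab hlen
    obtain ⟨s'', hs'', htok', hbal''⟩ := ih _ (h ▸ hpot) s' hs' rfl
    exact ⟨s'', hs'', htok'.trans htok, hbal''⟩

end Configurations

end TokenBalancing

open TokenBalancing

/-- There exists a locally optimal discrete load balancing in which every token
ends within distance `L` of its original node: there is a transport plan `z`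
(`z u v` = number of tokens moved from `u` to `v`) supported on pairs at
distance at most `L`, turning the input loads `x` into happy output loads `y`. -/
theorem stmt2 {V : Type*} [Fintype V] [DecidableEq V] (G : SimpleGraph V)
    (L : ℕ) (x : V → ℕ) (hx : ∀ v, x v ≤ L) :
    ∃ (y : V → ℕ) (z : V → V → ℕ),
      (∀ u v, z u v ≠ 0 → G.Reachable u v ∧ G.dist u v ≤ L) ∧
      (∀ u, ∑ v, z u v = x u) ∧
      (∀ v, ∑ u, z u v = y v) ∧
      (∀ v, y v ≤ L) ∧
      (∀ u v, G.Adj u v → |(y u : ℤ) - (y v : ℤ)| ≤ 1) := by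
  obtain ⟨s, hs, htok, hbal⟩ :=
    exists_balanced (fun v => initStack v (x v)) (fun v => wellPlaced_initStack G v (x v))
  have hstart : ∀ v, ∀ t ∈ s v, t.startHeight ≤ L := by
    intro v t ht
    obtain ⟨w, hw⟩ := mem_tokens.mp (htok ▸ mem_tokens.mpr ⟨v, ht⟩)
    exact (mem_initStack hw).2.trans (hx w)
  refine ⟨fun v => (s v).length, fun u v => (s v).countP (·.origin = u), ?_, fun u => ?_,
    fun v => sum_countP_origin (s v), fun v => (hs v).length_le (hstart v), hbal⟩
  · intro u v huv
    obtain ⟨t, ht, rfl⟩ := by simpa using List.countP_pos_iff.mp (Nat.pos_of_ne_zero huv)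
    obtain ⟨hreach, hdist⟩ := (hs v).of_mem ht
    exact ⟨hreach, by have := hstart v t ht; omega⟩
  · rw [← countP_tokens, htok, countP_tokens]
    simp [countP_origin_initStack]
end

section
/- Any deterministic local algorithm (with radius T, i.e., the output load of a node depends only on the inputs within distance T) that solves fractional or discrete load balancing on all paths requires T ≥ ⌊L/2⌋, i.e., T = Ω(L). -/
/-!
Compare a step input, which equals `L` on the radius-`T` ball around a node `v` and `0` elsewhere,
with the constant inputs `L` and `0`. A radius-`T` algorithm cannot tell the step input from the
all-`L` input at `v`, nor from the all-`0` input (whose only balanced output is `0`) at a node `w`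
at distance `2T + 1` from `v`. Since outputs change by at most `1` along each edge, the output of
the all-`L` input at `v` is at most `2T + 1`. On a path with `4T + 2` nodes every node has such a
partner `w`, so the total output of the all-`L` input, which must equal `(4T + 2) L`, is at most
`(4T + 2)(2T + 1)`; hence `L ≤ 2T + 1`.
-/

open Finset

abbrev PathAlgorithm : Type := (n : ℕ) → (Fin n → ℕ) → (Fin n → ℝ)

def PathAlgorithm.IsLocal (T : ℕ) (A : PathAlgorithm) : Prop :=
  ∀ (n : ℕ) (x x' : Fin n → ℕ) (v : Fin n),
    (∀ u : Fin n, |(u : ℤ) - (v : ℤ)| ≤ (T : ℤ) → x u = x' u) → A n x v = A n x' v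

def PathAlgorithm.IsLoadBalancing (L : ℕ) (A : PathAlgorithm) : Prop :=
  ∀ (n : ℕ) (x : Fin n → ℕ), (∀ v, x v ≤ L) →
    (∀ v, 0 ≤ A n x v) ∧
    (∑ v, A n x v = ∑ v, (x v : ℝ)) ∧
    (∀ v w : Fin n, (v : ℕ) + 1 = (w : ℕ) → |A n x v - A n x w| ≤ 1)

lemma abs_sub_le_of_abs_sub_succ_le_one {n : ℕ} {y : Fin n → ℝ}
    (hy : ∀ v w : Fin n, (v : ℕ) + 1 = w → |y v - y w| ≤ 1) (v w : Fin n) :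
    |y v - y w| ≤ |((v : ℤ) - w : ℤ)| := by
  wlog hvw : v ≤ w generalizing v w
  · rw [abs_sub_comm, abs_sub_comm (v : ℤ)]
    exact this w v (le_of_not_ge hvw)
  obtain ⟨k, hk⟩ := Nat.exists_eq_add_of_le (Fin.le_iff_val_le_val.mp hvw)
  induction k generalizing w with
  | zero => simp [Fin.ext hk]
  | succ k ih =>
    set u : Fin n := ⟨v + k, by omega⟩
    have hu : ((v : ℤ) - u : ℤ) = -k := by simp [u]
    have hw : ((v : ℤ) - w : ℤ) = -(k + 1 : ℕ) := by push_cast; omega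
    have hvu := ih u (Fin.le_iff_val_le_val.mpr (by simp [u])) rfl
    calc |y v - y w| ≤ |y v - y u| + |y u - y w| := abs_sub_le _ _ _
      _ ≤ |((v : ℤ) - u : ℤ)| + 1 := add_le_add hvu (hy u w (by simp [u]; omega))
      _ = |((v : ℤ) - w : ℤ)| := by
        rw [hu, hw, abs_neg, abs_neg, Nat.abs_cast, Nat.abs_cast]; push_cast; ring

lemma Fin.exists_abs_sub_eq (d : ℕ) (v : Fin (2 * d)) :
    ∃ w : Fin (2 * d), |(v : ℤ) - w| = d := by
  by_cases hv : (v : ℕ) < d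
  · exact ⟨⟨v + d, by omega⟩, by simp⟩
  · refine ⟨⟨v - d, by omega⟩, ?_⟩
    show |((v : ℕ) : ℤ) - ((v - d : ℕ) : ℤ)| = d
    rw [Nat.cast_sub (not_lt.mp hv)]
    simp

namespace PathAlgorithm

variable {A : PathAlgorithm} {L T : ℕ}

lemma IsLoadBalancing.apply_zero (hA : A.IsLoadBalancing L) (n : ℕ) (v : Fin n) :
    A n (fun _ => 0) v = 0 := by
  obtain ⟨hnonneg, hsum, -⟩ := hA n (fun _ => 0) (fun _ => L.zero_le)
  simp only [Nat.cast_zero, sum_const_zero] at hsum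
  exact (sum_eq_zero_iff_of_nonneg fun u _ => hnonneg u).mp hsum v (mem_univ v)

lemma IsLoadBalancing.apply_const_le_abs_sub (hloc : A.IsLocal T) (hA : A.IsLoadBalancing L)
    {n : ℕ} {v w : Fin n} (hvw : 2 * T < |(v : ℤ) - w|) :
    A n (fun _ => L) v ≤ |((v : ℤ) - w : ℤ)| := by
  set x : Fin n → ℕ := fun u => if |(u : ℤ) - v| ≤ T then L else 0
  obtain ⟨-, -, hlip⟩ := hA n x fun u => by dsimp only [x]; split <;> omega
  have hxv : A n x v = A n (fun _ => L) v := hloc n _ _ v fun u hu => if_pos hu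
  have hxw : A n x w = 0 := by
    refine (hloc n x (fun _ => 0) w fun u hu => if_neg ?_).trans (hA.apply_zero n w)
    rw [lt_abs] at hvw
    rw [abs_le] at hu ⊢
    omega
  calc A n (fun _ => L) v = A n x v - A n x w := by rw [hxv, hxw, sub_zero]
    _ ≤ |A n x v - A n x w| := le_abs_self _
    _ ≤ |((v : ℤ) - w : ℤ)| := abs_sub_le_of_abs_sub_succ_le_one hlip v w

theorem le_two_mul_add_one (hloc : A.IsLocal T) (hA : A.IsLoadBalancing L) :
    L ≤ 2 * T + 1 := by
  set n := 2 * (2 * T + 1)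
  have hbound (v : Fin n) : A n (fun _ => L) v ≤ 2 * T + 1 := by
    obtain ⟨w, hw⟩ := Fin.exists_abs_sub_eq (2 * T + 1) v
    have hfar : 2 * T < |(v : ℤ) - w| := by rw [hw]; omega
    have := hA.apply_const_le_abs_sub hloc hfar
    rw [hw] at this
    exact_mod_cast this
  have htotal : (n : ℝ) * L ≤ n * (2 * T + 1) := by
    calc (n : ℝ) * L = ∑ v, A n (fun _ => L) v := by
          rw [(hA n _ fun _ => le_rfl).2.1]; simp
      _ ≤ ∑ _ : Fin n, (2 * T + 1 : ℝ) := sum_le_sum fun v _ => hbound v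
      _ = n * (2 * T + 1) := by simp [mul_add]
  exact_mod_cast le_of_mul_le_mul_left htotal (by positivity)

end PathAlgorithm

/-- Lower bound for local load balancing on paths: any deterministic radius-`T`
local algorithm `A` on paths (the output of a node depends only on the inputs
within distance `T`) that, on every input with loads in `{0,…,L}`, outputs
nonnegative loads preserving the total load and making all edges happy,
must have `T ≥ ⌊L/2⌋`. -/
theorem stmt4 (L T : ℕ)
    (A : (n : ℕ) → (Fin n → ℕ) → (Fin n → ℝ))
    (hloc : ∀ (n : ℕ) (x x' : Fin n → ℕ) (v : Fin n),
      (∀ u : Fin n, |(u : ℤ) - (v : ℤ)| ≤ (T : ℤ) → x u = x' u) → A n x v = A n x' v)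
    (hcorrect : ∀ (n : ℕ) (x : Fin n → ℕ), (∀ v, x v ≤ L) →
      (∀ v, 0 ≤ A n x v) ∧
      (∑ v, A n x v = ∑ v, (x v : ℝ)) ∧
      (∀ v w : Fin n, (v : ℕ) + 1 = (w : ℕ) → |A n x v - A n x w| ≤ 1)) :
    L / 2 ≤ T := by
  have := PathAlgorithm.le_two_mul_add_one hloc hcorrect
  omega
end

section
/- On a path with a monotone (non-increasing left to right) load configuration, one round of any match-and-balance algorithm preserves monotonicity: if y(i) ≥ y(i+1) for all i, then after balancing along any matching M (where for each matched edge (u,v) with y(u) > y(v), at most (y(u)−y(v))/2 units move from u to v), the new configuration y' satisfies y'(i) ≥ y'(i+1) for all i. -/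
/-!
A matched edge `{i, i+1}` stays ordered because at most half the gap moves across it.
Across an unmatched edge, node `i` can only gain load (it is at most a right endpoint)
and node `i + 1` can only lose load (it is at most a left endpoint), so the old
inequality `y (i + 1) ≤ y i` survives.
-/

section MatchAndBalance

variable {y y' d : ℤ → ℝ} {M : Set ℤ}

theorem load_le_update_of_not_mem (hd0 : ∀ i ∈ M, 0 ≤ d i)
    (hupd : ∀ i ∈ M, y' i = y i - d i ∧ y' (i + 1) = y (i + 1) + d i)
    (hfix : ∀ i : ℤ, i ∉ M → i - 1 ∉ M → y' i = y i) {i : ℤ} (hi : i ∉ M) :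
    y i ≤ y' i := by
  by_cases hprev : i - 1 ∈ M
  · have h := (hupd (i - 1) hprev).2
    rw [sub_add_cancel] at h
    linarith [hd0 (i - 1) hprev]
  · exact (hfix i hi hprev).ge

theorem update_le_load_of_pred_not_mem (hd0 : ∀ i ∈ M, 0 ≤ d i)
    (hupd : ∀ i ∈ M, y' i = y i - d i ∧ y' (i + 1) = y (i + 1) + d i)
    (hfix : ∀ i : ℤ, i ∉ M → i - 1 ∉ M → y' i = y i) {i : ℤ} (hi : i - 1 ∉ M) :
    y' i ≤ y i := by
  by_cases hmem : i ∈ M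
  · linarith [(hupd i hmem).1, hd0 i hmem]
  · exact (hfix i hmem hi).le

theorem update_succ_le_of_mem (hd : ∀ i ∈ M, 0 ≤ d i ∧ d i ≤ (y i - y (i + 1)) / 2)
    (hupd : ∀ i ∈ M, y' i = y i - d i ∧ y' (i + 1) = y (i + 1) + d i) {i : ℤ} (hi : i ∈ M) :
    y' (i + 1) ≤ y' i := by
  linarith [(hupd i hi).1, (hupd i hi).2, (hd i hi).2]

end MatchAndBalance

theorem stmt5_general (y y' : ℤ → ℝ) (M : Set ℤ) (d : ℤ → ℝ)
    (hmono : ∀ i : ℤ, y (i + 1) ≤ y i)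
    (hd : ∀ i ∈ M, 0 ≤ d i ∧ d i ≤ (y i - y (i + 1)) / 2)
    (hupd : ∀ i ∈ M, y' i = y i - d i ∧ y' (i + 1) = y (i + 1) + d i)
    (hfix : ∀ i : ℤ, i ∉ M → i - 1 ∉ M → y' i = y i) :
    ∀ i : ℤ, y' (i + 1) ≤ y' i := by
  intro i
  by_cases hi : i ∈ M
  · exact update_succ_le_of_mem hd hupd hi
  · have hd0 : ∀ j ∈ M, 0 ≤ d j := fun j hj => (hd j hj).1
    have hsucc : i + 1 - 1 ∉ M := by rwa [add_sub_cancel_right]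
    calc y' (i + 1) ≤ y (i + 1) := update_le_load_of_pred_not_mem hd0 hupd hfix hsucc
      _ ≤ y i := hmono i
      _ ≤ y' i := load_le_update_of_not_mem hd0 hupd hfix hi

/-- One round of a match-and-balance algorithm preserves monotonicity on a path:
if the loads `y` are non-increasing from left to right, and we balance along a
matching `M` (the edge `{i,i+1}` is represented by its left endpoint `i`),
moving `d i ∈ [0, (y i − y (i+1))/2]` units from `i` to `i+1` for each matched
edge and leaving unmatched nodes untouched, then the new loads `y'` are still
non-increasing. -/
theorem stmt5 (y y' : ℤ → ℝ) (M : Set ℤ) (d : ℤ → ℝ)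
    (hmatch : ∀ i ∈ M, i + 1 ∉ M)
    (hmono : ∀ i : ℤ, y (i + 1) ≤ y i)
    (hd : ∀ i ∈ M, 0 ≤ d i ∧ d i ≤ (y i - y (i + 1)) / 2)
    (hupd : ∀ i ∈ M, y' i = y i - d i ∧ y' (i + 1) = y (i + 1) + d i)
    (hfix : ∀ i : ℤ, i ∉ M → i - 1 ∉ M → y' i = y i) :
    ∀ i : ℤ, y' (i + 1) ≤ y' i :=
  stmt5_general y y' M d hmono hd hupd hfix
end

section
/- Any match-and-balance algorithm requires Ω(L²) rounds in the worst case on paths: on the input path with loads L on the left half and 0 on the right half, any valid final configuration forces Ω(L³) total units of work (load times distance moved), while each match-and-balance round performs at most L/2 units of work on a monotone configuration. -/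
/-!
A round moving `f i` units across each edge `(i, i + 1)`, with `0 ≤ f i ≤ (y i - y (i + 1)) / 2`,
keeps the profile antitone with values in `[0, L]`, so it moves at most `(y a - y b) / 2 ≤ L / 2`
units across any block of consecutive edges `[a, b)`. The total flow across an edge `k` is at
least the load that ended up to the right of `k`. If finally `y 1 ≥ (L - 1) / 2`, happiness keeps
about `L / 4` on each of the nodes `q + 1, …, 2q` for `q ≈ L / 8`, so each of the `q` edges
`0, …, q - 1` carried about `q L / 4` units: the total work is `Ω(L³)`, hence there were `Ω(L²)`
rounds. Otherwise the mirror image `i ↦ 1 - i`, `y ↦ L - y` of the run, again a run from the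
step profile, is in the first case.
-/

open Finset

theorem Int.sum_Ico_sub_add_one {M : Type*} [AddCommGroup M] (g : ℤ → M) {a b : ℤ} (hab : a ≤ b) :
    ∑ i ∈ Ico a b, (g i - g (i + 1)) = g a - g b := by
  induction b, hab using Int.leInduction with
  | base => simp
  | succ b hab ih =>
    rw [← sum_Ico_add_eq_sum_Ico_add_one hab, ih]
    abel

theorem sub_le_of_abs_sub_add_one_le_one {y : ℤ → ℝ} (hy : ∀ i, |y i - y (i + 1)| ≤ 1)
    {a b : ℤ} (hab : a ≤ b) : y a - y b ≤ b - a := by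
  induction b, hab using Int.leInduction with
  | base => simp
  | succ b hab ih =>
    have := (abs_le.mp (hy b)).2
    push_cast
    linarith

def stepProfile (L : ℝ) (i : ℤ) : ℝ := if i ≤ 0 then L else 0

theorem stepProfile_antitone {L : ℝ} (hL : 0 ≤ L) : Antitone (stepProfile L) := by
  refine antitone_int_of_succ_le fun i => ?_
  unfold stepProfile
  split_ifs <;> first | omega | exact le_rfl

theorem stepProfile_mem_Icc {L : ℝ} (hL : 0 ≤ L) (i : ℤ) : stepProfile L i ∈ Set.Icc 0 L := by
  unfold stepProfile; split_ifs <;> simp [hL]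

theorem sub_stepProfile_one_sub (L : ℝ) (i : ℤ) : L - stepProfile L (1 - i) = stepProfile L i := by
  unfold stepProfile; split_ifs <;> first | omega | simp

structure IsFlowStep (y y' f : ℤ → ℝ) : Prop where
  eq_add_sub : ∀ i, y' i = y i + f (i - 1) - f i
  mem_uIcc : ∀ i, f i ∈ Set.uIcc 0 ((y i - y (i + 1)) / 2)

theorem isFlowStep_indicator {M : Set ℤ} {d y y' : ℤ → ℝ} (hM : ∀ i ∈ M, i + 1 ∉ M)
    (hd : ∀ i ∈ M, d i ∈ Set.uIcc 0 ((y i - y (i + 1)) / 2))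
    (hmove : ∀ i ∈ M, y' i = y i - d i ∧ y' (i + 1) = y (i + 1) + d i)
    (hfix : ∀ i, i ∉ M → i - 1 ∉ M → y' i = y i) : IsFlowStep y y' (M.indicator d) where
  eq_add_sub i := by
    by_cases hi : i ∈ M
    · have hi' : i - 1 ∉ M := fun h => hM _ h (by simpa using hi)
      simp [hi, hi', (hmove i hi).1]
    by_cases hi' : i - 1 ∈ M
    · simpa [hi, hi'] using (hmove _ hi').2
    · simp [hi, hi', hfix i hi hi']
  mem_uIcc i := by
    by_cases hi : i ∈ M
    · simpa [hi] using hd i hi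
    · simp [hi]

namespace IsFlowStep

variable {y y' f : ℤ → ℝ}

theorem flow_mem_Icc (h : IsFlowStep y y' f) (hy : Antitone y) (i : ℤ) :
    f i ∈ Set.Icc 0 ((y i - y (i + 1)) / 2) := by
  have := h.mem_uIcc i
  rwa [Set.uIcc_of_le (div_nonneg (sub_nonneg.mpr (hy (by omega))) zero_le_two)] at this

theorem antitone (h : IsFlowStep y y' f) (hy : Antitone y) : Antitone y' := by
  refine antitone_int_of_succ_le fun i => ?_
  have h₁ := h.flow_mem_Icc hy (i - 1)
  have h₂ := h.flow_mem_Icc hy i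
  have h₃ := h.flow_mem_Icc hy (i + 1)
  rw [h.eq_add_sub, h.eq_add_sub, add_sub_cancel_right]
  simp only [Set.mem_Icc] at h₁ h₂ h₃
  linarith

theorem mem_Icc (h : IsFlowStep y y' f) (hy : Antitone y) {L : ℝ} (hb : ∀ i, y i ∈ Set.Icc 0 L)
    (i : ℤ) : y' i ∈ Set.Icc 0 L := by
  have h₁ := h.flow_mem_Icc hy (i - 1)
  have h₂ := h.flow_mem_Icc hy i
  have hb₁ := hb (i - 1)
  have hb₂ := hb i
  have hb₃ := hb (i + 1)
  rw [sub_add_cancel] at h₁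
  simp only [Set.mem_Icc] at *
  rw [h.eq_add_sub]
  constructor <;> linarith

theorem sum_Ico_sub (h : IsFlowStep y y' f) {a b : ℤ} (hab : a ≤ b) :
    ∑ i ∈ Ico a b, (y' i - y i) = f (a - 1) - f (b - 1) := by
  rw [← Int.sum_Ico_sub_add_one (fun i => f (i - 1)) hab]
  refine sum_congr rfl fun i _ => ?_
  rw [h.eq_add_sub, add_sub_cancel_right]
  ring

theorem sum_Ico_flow_le (h : IsFlowStep y y' f) (hy : Antitone y) {a b : ℤ} (hab : a ≤ b) :
    ∑ k ∈ Ico a b, f k ≤ (y a - y b) / 2 := by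
  rw [← Int.sum_Ico_sub_add_one y hab, sum_div]
  exact sum_le_sum fun k _ => (h.flow_mem_Icc hy k).2

theorem reflect (h : IsFlowStep y y' f) (L : ℝ) :
    IsFlowStep (fun i => L - y (1 - i)) (fun i => L - y' (1 - i)) (fun i => f (-i)) where
  eq_add_sub i := by
    rw [h.eq_add_sub, show 1 - i - 1 = -i by ring, show -(i - 1) = 1 - i by ring]
    ring
  mem_uIcc i := by
    convert h.mem_uIcc (-i) using 3
    rw [show 1 - (i + 1) = -i by ring, show -i + 1 = 1 - i by ring]
    ring

end IsFlowStep

section Run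

variable {R : ℕ} {y f : ℕ → ℤ → ℝ}

theorem antitone_of_isFlowStep (hrun : ∀ r < R, IsFlowStep (y r) (y (r + 1)) (f r))
    (h0 : Antitone (y 0)) : ∀ r ≤ R, Antitone (y r) := by
  intro r hr
  induction r with
  | zero => exact h0
  | succ r ih => exact (hrun r hr).antitone (ih (by omega))

theorem mem_Icc_of_isFlowStep (hrun : ∀ r < R, IsFlowStep (y r) (y (r + 1)) (f r))
    (h0 : Antitone (y 0)) {L : ℝ} (hb : ∀ i, y 0 i ∈ Set.Icc 0 L) :
    ∀ r ≤ R, ∀ i, y r i ∈ Set.Icc 0 L := by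
  intro r hr
  induction r with
  | zero => exact hb
  | succ r ih =>
    exact (hrun r hr).mem_Icc (antitone_of_isFlowStep hrun h0 r (by omega)) (ih (by omega))

theorem sum_Ico_sub_eq_of_isFlowStep (hrun : ∀ r < R, IsFlowStep (y r) (y (r + 1)) (f r))
    {a b : ℤ} (hab : a ≤ b) :
    ∑ i ∈ Ico a b, (y R i - y 0 i) = ∑ r ∈ range R, (f r (a - 1) - f r (b - 1)) := by
  induction R with
  | zero => simp
  | succ R ih =>
    rw [sum_range_succ, ← ih fun r hr => hrun r (by omega), ← (hrun R (by omega)).sum_Ico_sub hab,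
      ← sum_add_distrib]
    exact sum_congr rfl fun i _ => by ring

theorem sum_Ico_sub_le_of_isFlowStep (hrun : ∀ r < R, IsFlowStep (y r) (y (r + 1)) (f r))
    (h0 : Antitone (y 0)) {a b : ℤ} (hab : a ≤ b) :
    ∑ i ∈ Ico a b, (y R i - y 0 i) ≤ ∑ r ∈ range R, f r (a - 1) := by
  rw [sum_Ico_sub_eq_of_isFlowStep hrun hab]
  refine sum_le_sum fun r hr => ?_
  have hr : r < R := mem_range.mp hr
  have := ((hrun r hr).flow_mem_Icc (antitone_of_isFlowStep hrun h0 r hr.le) (b - 1)).1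
  linarith

theorem sum_Ico_sum_flow_le (hrun : ∀ r < R, IsFlowStep (y r) (y (r + 1)) (f r))
    (h0 : Antitone (y 0)) {L : ℝ} (hb : ∀ i, y 0 i ∈ Set.Icc 0 L) {a b : ℤ} (hab : a ≤ b) :
    ∑ k ∈ Ico a b, ∑ r ∈ range R, f r k ≤ R * (L / 2) := by
  rw [sum_comm]
  refine (sum_le_card_nsmul _ _ (L / 2) fun r hr => ?_).trans_eq (by simp)
  have hr : r < R := mem_range.mp hr
  have hya := (mem_Icc_of_isFlowStep hrun h0 hb r hr.le a).2
  have hyb := (mem_Icc_of_isFlowStep hrun h0 hb r hr.le b).1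
  have := (hrun r hr).sum_Ico_flow_le (antitone_of_isFlowStep hrun h0 r hr.le) hab
  linarith

end Run

theorem sq_mul_sub_le_of_isFlowStep {R : ℕ} {y f : ℕ → ℤ → ℝ} {L : ℝ} (hL : 0 ≤ L)
    (hrun : ∀ r < R, IsFlowStep (y r) (y (r + 1)) (f r)) (h0 : y 0 = stepProfile L)
    (hhappy : ∀ i, |y R i - y R (i + 1)| ≤ 1) (q : ℕ) :
    (q : ℝ) ^ 2 * (y R 1 - 2 * q) ≤ R * (L / 2) := by
  have hanti : Antitone (y 0) := h0 ▸ stepProfile_antitone hL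
  have hb : ∀ i, y 0 i ∈ Set.Icc 0 L := h0 ▸ stepProfile_mem_Icc hL
  have hflow : ∀ k ∈ Ico (0 : ℤ) q, q * (y R 1 - 2 * q) ≤ ∑ r ∈ range R, f r k := by
    intro k hk
    obtain ⟨hk0, hkq⟩ := mem_Ico.mp hk
    have hmass := sum_Ico_sub_le_of_isFlowStep hrun hanti (show k + 1 ≤ 2 * q + 1 by omega)
    rw [add_sub_cancel_right] at hmass
    calc (q : ℝ) * (y R 1 - 2 * q)
        = ∑ i ∈ Ico ((q : ℤ) + 1) (2 * q + 1), (y R 1 - 2 * q) := by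
          rw [sum_const, Int.card_Ico, show (2 * (q : ℤ) + 1 - (q + 1)).toNat = q by omega,
            nsmul_eq_mul]
      _ ≤ ∑ i ∈ Ico ((q : ℤ) + 1) (2 * q + 1), y R i := by
        refine sum_le_sum fun i hi => ?_
        have hi := mem_Ico.mp hi
        have := sub_le_of_abs_sub_add_one_le_one hhappy (show 1 ≤ i by omega)
        push_cast at this
        have : (i : ℝ) ≤ 2 * q + 1 := by exact_mod_cast (by omega : i ≤ 2 * q + 1)
        linarith
      _ ≤ ∑ i ∈ Ico (k + 1) (2 * q + 1), y R i :=
        sum_le_sum_of_subset_of_nonneg (Ico_subset_Ico (by omega) le_rfl) fun i _ _ =>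
          (mem_Icc_of_isFlowStep hrun hanti hb R le_rfl i).1
      _ = ∑ i ∈ Ico (k + 1) (2 * q + 1), (y R i - y 0 i) :=
        sum_congr rfl fun i hi => by
          rw [h0, stepProfile, if_neg (by have := mem_Ico.mp hi; omega), sub_zero]
      _ ≤ ∑ r ∈ range R, f r k := hmass
  calc (q : ℝ) ^ 2 * (y R 1 - 2 * q) = ∑ k ∈ Ico (0 : ℤ) q, q * (y R 1 - 2 * q) := by
        simp; ring
    _ ≤ ∑ k ∈ Ico (0 : ℤ) q, ∑ r ∈ range R, f r k := sum_le_sum hflow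
    _ ≤ R * (L / 2) := sum_Ico_sum_flow_le hrun hanti hb (by omega)

theorem sq_mul_half_sub_le_of_isFlowStep {R : ℕ} {y f : ℕ → ℤ → ℝ} {L : ℝ} (hL : 0 ≤ L)
    (hrun : ∀ r < R, IsFlowStep (y r) (y (r + 1)) (f r)) (h0 : y 0 = stepProfile L)
    (hhappy : ∀ i, |y R i - y R (i + 1)| ≤ 1) (q : ℕ) :
    (q : ℝ) ^ 2 * ((L - 1) / 2 - 2 * q) ≤ R * (L / 2) := by
  rcases le_or_gt ((L - 1) / 2) (y R 1) with hright | hleft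
  · exact le_trans (by gcongr) (sq_mul_sub_le_of_isFlowStep hL hrun h0 hhappy q)
  have hmirror := sq_mul_sub_le_of_isFlowStep hL (fun r hr => (hrun r hr).reflect L)
    (funext fun i => by rw [h0, sub_stepProfile_one_sub])
    (fun i => by
      rw [sub_sub_sub_cancel_left, show 1 - (i + 1) = -i by ring, show 1 - i = -i + 1 by ring]
      exact hhappy (-i)) q
  have hslope := (abs_le.mp (hhappy 0)).2
  rw [zero_add] at hslope
  refine le_trans ?_ hmirror
  gcongr
  rw [sub_self]
  linarith

/-- Any match-and-balance algorithm needs `Ω(L²)` rounds on paths: starting from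
the step input (`L` on nodes `≤ 0`, `0` on nodes `> 0`) on the (bi-infinite)
path, if `R` rounds of match-and-balance steps (balancing along a matching
`M r`, moving `d r i` from `i` to `i+1`, with `|d r i| ≤ |y r i − y r (i+1)|/2`
and directed from the higher to the lower endpoint) produce a configuration in
which all edges are happy, then `R ≥ c·L²`. -/
theorem stmt7 :
    ∃ c : ℝ, 0 < c ∧ ∃ L₀ : ℕ, ∀ L : ℕ, L₀ ≤ L →
      ∀ (R : ℕ) (y : ℕ → ℤ → ℝ) (M : ℕ → Set ℤ) (d : ℕ → ℤ → ℝ),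
        (∀ i : ℤ, y 0 i = if i ≤ 0 then (L : ℝ) else 0) →
        (∀ r < R,
          (∀ i ∈ M r, i + 1 ∉ M r) ∧
          (∀ i ∈ M r, d r i ∈ Set.uIcc 0 ((y r i - y r (i + 1)) / 2)) ∧
          (∀ i ∈ M r, y (r + 1) i = y r i - d r i ∧
            y (r + 1) (i + 1) = y r (i + 1) + d r i) ∧
          (∀ i : ℤ, i ∉ M r → i - 1 ∉ M r → y (r + 1) i = y r i)) →
        (∀ i : ℤ, |y R i - y R (i + 1)| ≤ 1) →
        c * (L : ℝ) ^ 2 ≤ R := by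
  refine ⟨1 / 1024, by norm_num, 16, fun L hL R y M d h0 hstep hhappy => ?_⟩
  have hrun : ∀ r < R, IsFlowStep (y r) (y (r + 1)) ((M r).indicator (d r)) := fun r hr =>
    isFlowStep_indicator (hstep r hr).1 (hstep r hr).2.1 (hstep r hr).2.2.1 (hstep r hr).2.2.2
  have hwork := sq_mul_half_sub_le_of_isFlowStep L.cast_nonneg hrun (funext h0) hhappy (L / 8)
  have hq₁ : (L : ℝ) ≤ 8 * (L / 8 : ℕ) + 7 := by exact_mod_cast (by omega : L ≤ 8 * (L / 8) + 7)
  have hq₂ : 8 * ((L / 8 : ℕ) : ℝ) ≤ L := by exact_mod_cast Nat.mul_div_le L 8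
  have hL16 : (16 : ℝ) ≤ L := by exact_mod_cast hL
  have hcube : (L : ℝ) ^ 3 / 2048 ≤ R * (L / 2) :=
    calc (L : ℝ) ^ 3 / 2048 = (L / 16) ^ 2 * (L / 8) := by ring
      _ ≤ ((L / 8 : ℕ) : ℝ) ^ 2 * ((L - 1) / 2 - 2 * (L / 8 : ℕ)) := by gcongr <;> linarith
      _ ≤ R * (L / 2) := hwork
  nlinarith
end

section
/- Careful algorithms need exponential time: consider the graph consisting of two complete (d−1)-ary trees of depth L/4 rooted at u and v, joined by the edge {u,v}, with all nodes of the u-tree having load 0 and all nodes of the v-tree having load L. In any solution (y,f) with |y(a)−y(b)| ≤ 1 on every edge and load conservation, the flow across the edge {u,v} satisfies |f(v,u)| ≥ d^{Ω(L)}. Consequently, any algorithm that changes each edge flow by at most poly(L) per round needs d^{Ω(L)} rounds. -/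
/-- Vertices of the two-tree instance: a side (`false` = the `u`-tree with load
`0`, `true` = the `v`-tree with load `L`) together with the path from the root,
a list of child indices of length at most `D` (so every internal node has `c`
children and the trees have depth `D`). -/
abbrev CarefulVert (c D : ℕ) := Bool × Σ k : Fin (D + 1), List.Vector (Fin c) k

/-- The graph of Theorem 3 (careful algorithms): two complete `c`-ary trees of
depth `D` (parent/child edges extend the root path by one label), whose roots
(the two nodes with empty root path) are joined by an edge. -/
def carefulGraph (c D : ℕ) : SimpleGraph (CarefulVert c D) :=
  SimpleGraph.fromRel (fun p q =>
    (p.1 = q.1 ∧ ∃ a : Fin c, (q.2.2.toList = a :: p.2.2.toList))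
    ∨ (p.2.2.toList = [] ∧ q.2.2.toList = [] ∧ p.1 ≠ q.1))

/-- The root of the side `b` tree. -/
def carefulRoot (c D : ℕ) (b : Bool) : CarefulVert c D :=
  (b, ⟨⟨0, Nat.succ_pos D⟩, List.Vector.nil⟩)

/-!
Flow conservation on one tree shows that the flow across the middle edge equals the total load of
the `u`-tree, and also the total deficit `L - y` of the `v`-tree. Loads change by at most one
per edge. If `y u ≥ D` (with `D = L / 4` the depth), every node of the `u`-tree has load at least
`D - depth ≥ 0`, and the `(d - 1) ^ (D - 1)` nodes of depth `D - 1` have load at least one.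
Otherwise `y v < D + 1`, and the same count applies to the deficit of the `v`-tree, as long as
`L ≥ 2 D + 1`. A flow built in steps of size at most `P` needs as many steps as this bound
divided by `P`.
-/

open Finset

theorem sum_inflow_eq_sum_inflow_compl {V : Type*} [Fintype V] [DecidableEq V]
    (f : V → V → ℝ) (hanti : ∀ u v, f u v = - f v u) (S : Finset V) :
    ∑ w ∈ S, ∑ u, f u w = ∑ w ∈ S, ∑ u ∈ Sᶜ, f u w := by
  have hinner : ∑ w ∈ S, ∑ u ∈ S, f u w = 0 := by
    have hneg : ∑ w ∈ S, ∑ u ∈ S, f u w = - ∑ w ∈ S, ∑ u ∈ S, f u w :=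
      calc ∑ w ∈ S, ∑ u ∈ S, f u w = ∑ u ∈ S, ∑ w ∈ S, -f w u :=
            sum_comm.trans (sum_congr rfl fun _ _ => sum_congr rfl fun _ _ => hanti _ _)
        _ = - ∑ w ∈ S, ∑ u ∈ S, f u w := by simp only [sum_neg_distrib]
    linarith
  simp_rw [← sum_add_sum_compl S (fun u => f u _), sum_add_distrib, hinner, zero_add]

theorem abs_le_mul_of_abs_sub_succ_le {s : ℕ → ℝ} {P : ℝ} {R : ℕ} (h0 : s 0 = 0)
    (hstep : ∀ r < R, |s (r + 1) - s r| ≤ P) : |s R| ≤ P * R := by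
  have h := dist_le_range_sum_of_dist_le (f := s) R (d := fun _ => P)
    fun hr => by rw [Real.dist_eq, abs_sub_comm]; exact hstep _ hr
  simpa [Real.dist_eq, h0, mul_comm] using h

def carefulSide (c D : ℕ) (b : Bool) : Finset (CarefulVert c D) := {w | w.1 = b}

section CarefulGraph

variable {c D : ℕ}

@[simp]
theorem mem_carefulSide {b : Bool} {w : CarefulVert c D} : w ∈ carefulSide c D b ↔ w.1 = b := by
  simp [carefulSide]

theorem carefulGraph_adj_roots :
    (carefulGraph c D).Adj (carefulRoot c D true) (carefulRoot c D false) := by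
  simp [carefulGraph, carefulRoot]

theorem eq_carefulRoot_of_toList_eq_nil {w : CarefulVert c D} (h : w.2.2.toList = []) :
    w = carefulRoot c D w.1 := by
  obtain ⟨b, ⟨k, hk⟩, v⟩ := w
  obtain rfl : k = 0 := by simpa using congrArg List.length h
  rw [List.Vector.eq_nil v]
  rfl

theorem eq_carefulRoot_of_adj_of_ne {u w : CarefulVert c D} (h : (carefulGraph c D).Adj u w)
    (hne : u.1 ≠ w.1) : u = carefulRoot c D u.1 ∧ w = carefulRoot c D w.1 := by
  rw [carefulGraph, SimpleGraph.fromRel_adj] at h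
  rcases h.2 with (⟨hside, -⟩ | ⟨hu, hw, -⟩) | (⟨hside, -⟩ | ⟨hw, hu, -⟩)
  · exact absurd hside hne
  · exact ⟨eq_carefulRoot_of_toList_eq_nil hu, eq_carefulRoot_of_toList_eq_nil hw⟩
  · exact absurd hside.symm hne
  · exact ⟨eq_carefulRoot_of_toList_eq_nil hu, eq_carefulRoot_of_toList_eq_nil hw⟩

theorem carefulGraph_adj_tail (b : Bool) {k : ℕ} (hk : k + 1 < D + 1)
    (v : List.Vector (Fin c) (k + 1)) :
    (carefulGraph c D).Adj (b, ⟨⟨k, by omega⟩, v.tail⟩) (b, ⟨⟨k + 1, hk⟩, v⟩) := by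
  rw [carefulGraph, SimpleGraph.fromRel_adj]
  refine ⟨by simp, Or.inl (Or.inl ⟨rfl, v.head, ?_⟩)⟩
  rw [← List.Vector.toList_cons, List.Vector.cons_head_tail]

theorem abs_sub_carefulRoot_le_depth {g : CarefulVert c D → ℝ}
    (hg : ∀ u v, (carefulGraph c D).Adj u v → |g u - g v| ≤ 1) (w : CarefulVert c D) :
    |g w - g (carefulRoot c D w.1)| ≤ (w.2.1 : ℕ) := by
  obtain ⟨b, ⟨k, hk⟩, v⟩ := w
  induction k with
  | zero => rw [List.Vector.eq_nil v]; simp [carefulRoot]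
  | succ k ih =>
    have hedge := hg _ _ (carefulGraph_adj_tail b hk v)
    have hparent := ih (by omega) v.tail
    push_cast at hparent ⊢
    rw [abs_sub_comm] at hedge
    calc _ ≤ |g (b, ⟨⟨k + 1, hk⟩, v⟩) - g (b, ⟨⟨k, by omega⟩, v.tail⟩)|
          + |g (b, ⟨⟨k, by omega⟩, v.tail⟩) - g (carefulRoot c D b)| := abs_sub_le _ _ _
      _ ≤ (k : ℝ) + 1 := by linarith

theorem pow_le_sum_carefulSide {g : CarefulVert c D → ℝ}
    (hg : ∀ u v, (carefulGraph c D).Adj u v → |g u - g v| ≤ 1) (b : Bool) (hD : 1 ≤ D)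
    (hroot : (D : ℝ) ≤ g (carefulRoot c D b)) :
    (c : ℝ) ^ (D - 1) ≤ ∑ w ∈ carefulSide c D b, g w := by
  have hlower (w : CarefulVert c D) (hw : w.1 = b) : (D : ℝ) - (w.2.1 : ℕ) ≤ g w := by
    have := abs_sub_carefulRoot_le_depth hg w
    rw [hw] at this
    linarith [(abs_le.mp this).1]
  let level : List.Vector (Fin c) (D - 1) ↪ CarefulVert c D :=
    ⟨fun v => (b, ⟨⟨D - 1, by omega⟩, v⟩), fun v v' h => by simpa using h⟩
  have hlevel : univ.map level ⊆ carefulSide c D b := by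
    intro w hw
    obtain ⟨v, -, rfl⟩ := mem_map.mp hw
    exact mem_carefulSide.mpr rfl
  calc (c : ℝ) ^ (D - 1) = ∑ v, (1 : ℝ) := by simp
    _ ≤ ∑ v, g (level v) := sum_le_sum fun v _ => by
        have : (D : ℝ) - (D - 1 : ℕ) ≤ g (level v) := hlower (level v) rfl
        push_cast [Nat.cast_sub hD] at this
        linarith
    _ = ∑ w ∈ univ.map level, g w := (sum_map _ _ _).symm
    _ ≤ ∑ w ∈ carefulSide c D b, g w := by
        refine sum_le_sum_of_subset_of_nonneg hlevel fun w hw _ => ?_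
        have := hlower w (mem_carefulSide.mp hw)
        have : ((w.2.1 : ℕ) : ℝ) ≤ D := by exact_mod_cast Nat.lt_succ_iff.mp w.2.1.isLt
        linarith

theorem sum_inflow_carefulSide {f : CarefulVert c D → CarefulVert c D → ℝ}
    (hanti : ∀ u v, f u v = - f v u)
    (hsupp : ∀ u v, ¬ (carefulGraph c D).Adj u v → f u v = 0) (b : Bool) :
    ∑ w ∈ carefulSide c D b, ∑ u, f u w = f (carefulRoot c D (!b)) (carefulRoot c D b) := by
  have hcross {u w : CarefulVert c D} (hu : u.1 ≠ b) (hw : w.1 = b)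
      (hroot : u = carefulRoot c D u.1 → w = carefulRoot c D w.1 → False) : f u w = 0 :=
    hsupp u w fun h => (eq_carefulRoot_of_adj_of_ne h (hw ▸ hu)).elim hroot
  rw [sum_inflow_eq_sum_inflow_compl f hanti,
    sum_eq_single_of_mem (carefulRoot c D b) ((mem_carefulSide (b := b)).mpr rfl) fun w hw hne =>
      sum_eq_zero fun u hu => hcross (by simpa using hu) (mem_carefulSide.mp hw)
        fun _ hw' => hne (mem_carefulSide.mp hw ▸ hw'),
    sum_eq_single_of_mem (carefulRoot c D (!b)) (by simp [carefulRoot]) fun u hu hne =>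
      hcross (by simpa using hu) rfl fun hu' _ => hne ?_]
  rwa [show u.1 = !b by simpa [Bool.eq_not] using hu] at hu'

theorem pow_le_flow_carefulRoot {L : ℕ} (hD : 1 ≤ D) (hL : 2 * D + 1 ≤ L)
    {y : CarefulVert c D → ℝ} {f : CarefulVert c D → CarefulVert c D → ℝ}
    (hanti : ∀ u v, f u v = - f v u)
    (hsupp : ∀ u v, ¬ (carefulGraph c D).Adj u v → f u v = 0)
    (hcons : ∀ w, y w = (if w.1 then (L : ℝ) else 0) + ∑ u, f u w)
    (hhappy : ∀ u v, (carefulGraph c D).Adj u v → |y u - y v| ≤ 1) :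
    (c : ℝ) ^ (D - 1) ≤ f (carefulRoot c D true) (carefulRoot c D false) := by
  have hload : ∑ w ∈ carefulSide c D false, y w
      = f (carefulRoot c D true) (carefulRoot c D false) := by
    rw [← Bool.not_false, ← sum_inflow_carefulSide hanti hsupp false]
    exact sum_congr rfl fun w hw => by simp [hcons w, mem_carefulSide.mp hw]
  have hdeficit : ∑ w ∈ carefulSide c D true, ((L : ℝ) - y w)
      = f (carefulRoot c D true) (carefulRoot c D false) := by
    calc _ = - ∑ w ∈ carefulSide c D true, ∑ u, f u w := by
          rw [← sum_neg_distrib]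
          exact sum_congr rfl fun w hw => by simp [hcons w, mem_carefulSide.mp hw]
      _ = _ := by rw [sum_inflow_carefulSide hanti hsupp true, Bool.not_true, hanti, neg_neg]
  by_cases hu : (D : ℝ) ≤ y (carefulRoot c D false)
  · exact hload ▸ pow_le_sum_carefulSide hhappy false hD hu
  · have hmid := (abs_le.mp (hhappy _ _ carefulGraph_adj_roots)).2
    have hL' : (2 * D + 1 : ℝ) ≤ L := by exact_mod_cast hL
    refine hdeficit ▸ pow_le_sum_carefulSide (g := fun w => L - y w) (fun u v huv => ?_) true hD
      (by linarith)
    rw [sub_sub_sub_cancel_left, abs_sub_comm]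
    exact hhappy u v huv

end CarefulGraph

theorem stmt9_general (d L : ℕ) (hd : 3 ≤ d) (hL : 4 ≤ L)
    (y : CarefulVert (d - 1) (L / 4) → ℝ)
    (f : CarefulVert (d - 1) (L / 4) → CarefulVert (d - 1) (L / 4) → ℝ)
    (hanti : ∀ u v, f u v = - f v u)
    (hsupp : ∀ u v, ¬ (carefulGraph (d - 1) (L / 4)).Adj u v → f u v = 0)
    (hcons : ∀ w, y w = (if w.1 then (L : ℝ) else 0) + ∑ u, f u w)
    (hhappy : ∀ u v, (carefulGraph (d - 1) (L / 4)).Adj u v → |y u - y v| ≤ 1) :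
    ((d : ℝ) - 1) ^ (L / 4 - 1)
        ≤ |f (carefulRoot (d - 1) (L / 4) true) (carefulRoot (d - 1) (L / 4) false)| ∧
    (∀ (P : ℝ) (R : ℕ) (fs : ℕ → ℝ), fs 0 = 0 →
      (∀ r < R, |fs (r + 1) - fs r| ≤ P) →
      fs R = f (carefulRoot (d - 1) (L / 4) true) (carefulRoot (d - 1) (L / 4) false) →
      ((d : ℝ) - 1) ^ (L / 4 - 1) ≤ P * R) := by
  have hflow := pow_le_flow_carefulRoot (by omega) (by omega) hanti hsupp hcons hhappy
  rw [← Nat.cast_one, ← Nat.cast_sub (by omega : 1 ≤ d)]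
  have habs := hflow.trans (le_abs_self _)
  refine ⟨habs, fun P R fs h0 hstep hR => habs.trans ?_⟩
  rw [← hR]
  exact abs_le_mul_of_abs_sub_succ_le h0 hstep

/-- Careful algorithms need exponential time: on the two-tree instance with
`c = d − 1` children per node and depth `L/4`, input load `0` on the `u`-tree
and `L` on the `v`-tree, every valid solution `(y, f)` (nonnegative loads,
antisymmetric flow supported on edges, load conservation, all edges happy) must
route `(d−1)^{L/4−1} = d^{Ω(L)}` units of flow across the middle edge; hence
any algorithm changing each edge flow by at most `P` per round needs at least
`(d−1)^{L/4−1}/P` rounds to produce it. -/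
theorem stmt9 (d L : ℕ) (hd : 3 ≤ d) (hL : 4 ≤ L) (hdvd : 4 ∣ L)
    (y : CarefulVert (d - 1) (L / 4) → ℝ)
    (f : CarefulVert (d - 1) (L / 4) → CarefulVert (d - 1) (L / 4) → ℝ)
    (hy0 : ∀ w, 0 ≤ y w)
    (hanti : ∀ u v, f u v = - f v u)
    (hsupp : ∀ u v, ¬ (carefulGraph (d - 1) (L / 4)).Adj u v → f u v = 0)
    (hcons : ∀ w, y w = (if w.1 then (L : ℝ) else 0) + ∑ u, f u w)
    (hhappy : ∀ u v, (carefulGraph (d - 1) (L / 4)).Adj u v → |y u - y v| ≤ 1) :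
    ((d : ℝ) - 1) ^ (L / 4 - 1)
        ≤ |f (carefulRoot (d - 1) (L / 4) true) (carefulRoot (d - 1) (L / 4) false)| ∧
    (∀ (P : ℝ) (R : ℕ) (fs : ℕ → ℝ), fs 0 = 0 →
      (∀ r < R, |fs (r + 1) - fs r| ≤ P) →
      fs R = f (carefulRoot (d - 1) (L / 4) true) (carefulRoot (d - 1) (L / 4) false) →
      ((d : ℝ) - 1) ^ (L / 4 - 1) ≤ P * R) :=
  stmt9_general d L hd hL y f hanti hsupp hcons hhappy
end

section
/- A ⟦−1,1⟧-stable token configuration on a path yields a locally balanced load vector: if the configuration is k-stable for all k ∈ {−1,0,1} (each token at slot (v,i) with i > 1 has a token below it at (v+k, i−1)), then setting y(v) = number of tokens at node v gives |y(v) − y(v+1)| ≤ 1 for all adjacent nodes. -/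
/-- A token configuration on the path (given by per-node token counts `y`, the
tokens at node `v` occupying slots `(v,1),…,(v,y v)`) is `k`-stable if every
token at slot `(v,i)` with `i > 1` has a token at `(v+k, i−1)`. -/
def kStable (y : ℤ → ℕ) (k : ℤ) : Prop :=
  ∀ (v : ℤ) (i : ℕ), 2 ≤ i → i ≤ y v → i - 1 ≤ y (v + k)

/-- Apply stability to the topmost token at `v`. -/
theorem kStable.le_add_one {y : ℤ → ℕ} {k : ℤ} (h : kStable y k) (v : ℤ) :
    y v ≤ y (v + k) + 1 := by
  by_cases htop : 2 ≤ y v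
  · have := h v (y v) htop le_rfl
    omega
  · omega

theorem stmt12_general (y : ℤ → ℕ)
    (hstab : ∀ k : ℤ, k ∈ ({-1, 0, 1} : Set ℤ) → kStable y k) :
    ∀ v : ℤ, |(y v : ℤ) - (y (v + 1) : ℤ)| ≤ 1 := by
  intro v
  have hright : y v ≤ y (v + 1) + 1 := (hstab 1 (by simp)).le_add_one v
  have hleft : y (v + 1) ≤ y v + 1 := by
    simpa using (hstab (-1) (by simp)).le_add_one (v + 1)
  rw [abs_le]
  omega

/-- A `⟦−1,1⟧`-stable token configuration on a path yields a locally balanced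
load vector: adjacent token counts differ by at most `1`. -/
theorem stmt12 (L : ℕ) (y : ℤ → ℕ) (hy : ∀ v, y v ≤ L)
    (hstab : ∀ k : ℤ, k ∈ ({-1, 0, 1} : Set ℤ) → kStable y k) :
    ∀ v : ℤ, |(y v : ℤ) - (y (v + 1) : ℤ)| ≤ 1 :=
  stmt12_general y hstab
end

section
/- Push lemma: for integers ℓ and k, if a token configuration on the infinite directed path is k-stable, then it is still k-stable after an ℓ-push, where an ℓ-push redistributes the tokens on each ℓ-diagonal S(v,ℓ) = ((v−ℓ,1), (v−2ℓ,2), ..., (v−Lℓ,L)) so that if the diagonal contains m tokens, its first m slots are occupied and the rest are empty. Moreover, after an ℓ-push the configuration is ℓ-stable. -/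
open scoped Classical

/-- All occupied slots `(v,i)` have level `1 ≤ i ≤ L`. -/
def SlotsOK (L : ℕ) (c : Set (ℤ × ℕ)) : Prop :=
  ∀ p ∈ c, 1 ≤ p.2 ∧ p.2 ≤ L

/-- A configuration is `k`-stable if every token at slot `(v,i)` with `i ≥ 2`
has a token at slot `(v+k, i−1)`. -/
def KStable (c : Set (ℤ × ℕ)) (k : ℤ) : Prop :=
  ∀ (v : ℤ) (i : ℕ), (v, i) ∈ c → 2 ≤ i → (v + k, i - 1) ∈ c

/-- Number of tokens on the `ℓ`-diagonal `S(v,ℓ) = ((v−ℓ,1), …, (v−Lℓ,L))`. -/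
noncomputable def diagCount (L : ℕ) (c : Set (ℤ × ℕ)) (ℓ v : ℤ) : ℕ :=
  ((Finset.Icc 1 L).filter (fun (j : ℕ) => ((v - (j : ℤ) * ℓ, j) : ℤ × ℕ) ∈ c)).card

/-- The configuration after an `ℓ`-push: on each `ℓ`-diagonal containing `m`
tokens, exactly the first `m` slots of the diagonal are occupied. -/
def pushed (L : ℕ) (c : Set (ℤ × ℕ)) (ℓ : ℤ) : Set (ℤ × ℕ) :=
  {p | 1 ≤ p.2 ∧ p.2 ≤ L ∧ p.2 ≤ diagCount L c ℓ (p.1 + (p.2 : ℤ) * ℓ)}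

/-!
Along an `ℓ`-diagonal, `k`-stability moves every token except the bottom one, at level `j`,
to level `j - 1` of the diagonal shifted by `k - ℓ`, so the token counts of the two diagonals
satisfy `m ≤ m' + 1`. In the pushed configuration the tokens of each diagonal sit in its
lowest slots, so a token at level `i ≥ 2` of a diagonal with `m ≥ i` tokens has, below it,
level `i - 1` of a diagonal with `m' ≥ m - 1 ≥ i - 1` tokens, which is occupied.
For `k = ℓ` the shifted diagonal is the diagonal itself.
-/

lemma mem_pushed {L : ℕ} {c : Set (ℤ × ℕ)} {ℓ v : ℤ} {i : ℕ} :
    (v, i) ∈ pushed L c ℓ ↔ 1 ≤ i ∧ i ≤ L ∧ i ≤ diagCount L c ℓ (v + i * ℓ) :=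
  Iff.rfl

lemma diagCount_le_diagCount_add_one {L : ℕ} {c : Set (ℤ × ℕ)} {k : ℤ} (hk : KStable c k)
    (ℓ w : ℤ) : diagCount L c ℓ w ≤ diagCount L c ℓ (w + k - ℓ) + 1 := by
  unfold diagCount
  set A := (Finset.Icc 1 L).filter (fun j : ℕ => ((w - j * ℓ, j) : ℤ × ℕ) ∈ c)
  have hmaps : Set.MapsTo (· - 1) (A.erase 1)
      ((Finset.Icc 1 L).filter (fun j : ℕ => ((w + k - ℓ - j * ℓ, j) : ℤ × ℕ) ∈ c)) := by
    intro j hj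
    simp only [A, Finset.coe_erase, Finset.coe_filter, Finset.mem_Icc, Set.mem_sdiff,
      Set.mem_ofPred_eq, Set.mem_singleton_iff] at hj ⊢
    obtain ⟨⟨⟨hj1, hjL⟩, hjc⟩, hj_ne⟩ := hj
    refine ⟨⟨by omega, by omega⟩, ?_⟩
    convert hk _ _ hjc (by omega) using 2
    push_cast [Nat.cast_sub (by omega : 1 ≤ j)]
    ring
  have hinj : Set.InjOn (· - 1) (A.erase 1 : Set ℕ) := by
    intro a ha b hb hab
    simp only [A, Finset.coe_erase, Finset.coe_filter, Finset.mem_Icc, Set.mem_sdiff,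
      Set.mem_ofPred_eq, Set.mem_singleton_iff] at ha hb hab
    omega
  have hcard := Finset.card_le_card_of_injOn _ hmaps hinj
  have herase := Finset.pred_card_le_card_erase (s := A) (a := 1)
  omega

lemma kStable_pushed_of_diagCount_le {L : ℕ} {c : Set (ℤ × ℕ)} {ℓ k : ℤ}
    (h : ∀ w, diagCount L c ℓ w ≤ diagCount L c ℓ (w + k - ℓ) + 1) :
    KStable (pushed L c ℓ) k := by
  intro v i hvi hi
  rw [mem_pushed] at hvi ⊢
  have hshift : v + k + ((i - 1 : ℕ) : ℤ) * ℓ = v + i * ℓ + k - ℓ := by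
    push_cast [Nat.cast_sub (by omega : 1 ≤ i)]
    ring
  have hcount := h (v + i * ℓ)
  rw [hshift]
  omega

theorem stmt13_general (L : ℕ) (c : Set (ℤ × ℕ)) (ℓ k : ℤ)
    (hk : KStable c k) :
    KStable (pushed L c ℓ) k ∧ KStable (pushed L c ℓ) ℓ :=
  ⟨kStable_pushed_of_diagCount_le (diagCount_le_diagCount_add_one hk ℓ),
    kStable_pushed_of_diagCount_le fun w => by simp⟩

/-- Push lemma: an `ℓ`-push preserves `k`-stability for every `k`, and the
resulting configuration is moreover `ℓ`-stable. -/
theorem stmt13 (L : ℕ) (c : Set (ℤ × ℕ)) (ℓ k : ℤ)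
    (hok : SlotsOK L c) (hk : KStable c k) :
    KStable (pushed L c ℓ) k ∧ KStable (pushed L c ℓ) ℓ :=
  stmt13_general L c ℓ k hk
end

section
/- In the discrete cone-freezing algorithm, a frozen token is stable: if a token occupies slot (v,i) and every slot (u,j) with i − j ≥ dist(v,u) and (u,j) ≠ (v,i) is full, then in the final load vector y (number of tokens per node) every edge incident to configurations containing only stable tokens is happy; in particular, if every token is stable then |y(u) − y(v)| ≤ 1 for all edges {u,v}. -/
/-! The top token of a node `a` with load `y a ≥ 2` sits at height `y a`; a neighbour `b` is at
distance `1`, so the slot `(b, y a - 1)` lies in its cone and must be full, i.e. `y a ≤ y b + 1`.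
Applying this in both directions along an edge bounds the load difference by `1`. -/

namespace SimpleGraph

variable {V : Type*}

/-- `y v` is the load of `v`: its occupied slots are `(v, 1), …, (v, y v)`. -/
def ConeStable (G : SimpleGraph V) (L : ℕ) (y : V → ℕ) : Prop :=
  ∀ (v : V) (i : ℕ), 1 ≤ i → i ≤ y v →
    ∀ (u : V) (j : ℕ), 1 ≤ j → j ≤ L → (u, j) ≠ (v, i) →
      (j : ℤ) ≤ (i : ℤ) - (G.dist v u : ℤ) → j ≤ y u

theorem ConeStable.load_le_load_add_one {G : SimpleGraph V} {L : ℕ} {y : V → ℕ}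
    (hstable : G.ConeStable L y) (hy : ∀ v, y v ≤ L) {a b : V} (hab : G.Adj a b) :
    y a ≤ y b + 1 := by
  by_contra! h
  have hslot : (b, y a - 1) ≠ (a, y a) := fun heq => hab.ne (congrArg Prod.fst heq).symm
  have hcone : ((y a - 1 : ℕ) : ℤ) ≤ (y a : ℤ) - (G.dist a b : ℤ) := by
    rw [dist_eq_one_iff_adj.mpr hab]
    omega
  have hfull : y a - 1 ≤ y b :=
    hstable a (y a) (by omega) le_rfl b (y a - 1) (by omega) ((Nat.sub_le _ _).trans (hy a))
      hslot hcone
  omega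

end SimpleGraph

/-- Cone stability implies happiness: tokens at node `v` occupy slots
`(v,1),…,(v,y v)`; a token at `(v,i)` is stable if every slot `(u,j) ≠ (v,i)`
of its downward cone (those with `i − j ≥ dist(v,u)`) is full. If every token
is stable, then the loads of adjacent nodes differ by at most `1`. -/
theorem stmt16 {V : Type*} (G : SimpleGraph V) (L : ℕ) (y : V → ℕ)
    (hy : ∀ v, y v ≤ L)
    (hstable : ∀ (v : V) (i : ℕ), 1 ≤ i → i ≤ y v →
      ∀ (u : V) (j : ℕ), 1 ≤ j → j ≤ L → (u, j) ≠ (v, i) →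
        (j : ℤ) ≤ (i : ℤ) - (G.dist v u : ℤ) → j ≤ y u) :
    ∀ u v, G.Adj u v → |(y u : ℤ) - (y v : ℤ)| ≤ 1 := by
  have hcone : G.ConeStable L y := hstable
  intro u v huv
  have huv' := hcone.load_le_load_add_one hy huv
  have hvu := hcone.load_le_load_add_one hy huv.symm
  rw [abs_le]
  omega
end
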